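/- If U and W are subspaces of R^n with orthonormal basis matrices V_1 (n × p) and V_2 (n × q), and M is the (p+q) × n matrix formed by stacking V_1^T and V_2^T, then the singular values σ_i of M satisfy σ_i² = 1 + cos φ_i for i ≤ min(p,q), where φ_1 ≤ ... ≤ φ_{min(p,q)} are the principal angles between U and W; equivalently φ_i = arccos(σ_i² − 1). -/

import Mathlib

open Matrix

/-- View a plain vector as an element of Euclidean space. -/
noncomputable def toEuc {n : ℕ} (v : Fin n → ℝ) : EuclideanSpace ℝ (Fin n) := WithLp.toLp 2 v

/-- The row space of a matrix, as a subspace of Euclidean space `ℝ^n`. -/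
noncomputable def rowSpace {m : Type*} {n : ℕ} (A : Matrix m (Fin n) ℝ) :
    Submodule ℝ (EuclideanSpace ℝ (Fin n)) :=
  Submodule.span ℝ (Set.range fun i => toEuc (A i))

/-- The orthogonal projection matrix onto a subspace of `ℝ^n`. -/
noncomputable def projMat {n : ℕ} (U : Submodule ℝ (EuclideanSpace ℝ (Fin n))) :
    Matrix (Fin n) (Fin n) ℝ :=
  Matrix.toEuclideanLin.symm (U.subtype ∘ₗ (Submodule.orthogonalProjectionOnto U).toLinearMap)

/-- The operator (spectral) norm of a matrix. -/
noncomputable def opNorm {m : Type*} [Fintype m] {n : ℕ} (A : Matrix m (Fin n) ℝ) : ℝ :=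
  ‖(Matrix.toEuclideanLin A).toContinuousLinearMap‖

/-- Restored helper (removed from Mathlib): `Aᵀ * A` is Hermitian over a trivial-star ring. -/
theorem Matrix.isHermitian_transpose_mul_self {α : Type*} {m n : Type*} [CommSemiring α]
    [StarRing α] [TrivialStar α] [Fintype m] (A : Matrix m n α) : (Aᵀ * A).IsHermitian := by
  rw [IsHermitian, conjTranspose_eq_transpose_of_trivial, transpose_mul, transpose_transpose]

/-- Singular values of a matrix, in ascending order. -/
noncomputable def svalAsc {m : Type*} [Fintype m] {n : ℕ} (A : Matrix m (Fin n) ℝ) :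
    Fin n → ℝ := fun i =>
  Real.sqrt ((Matrix.isHermitian_transpose_mul_self A).eigenvalues
    (Tuple.sort (Matrix.isHermitian_transpose_mul_self A).eigenvalues i))

/-- Singular values of a matrix, in descending order (`svalDesc A 0` is the largest). -/
noncomputable def svalDesc {m : Type*} [Fintype m] {n : ℕ} (A : Matrix m (Fin n) ℝ)
    (i : Fin n) : ℝ :=
  svalAsc A i.rev

/-!
Write `M = [V₁ᵀ; V₂ᵀ]` and `B = V₁ᵀ V₂`. Then `M Mᵀ = [[1, B], [Bᵀ, 1]]`, and block elimination
gives `(X - 1)^q χ(M Mᵀ) = (X - 1)^p χ(Bᵀ B)((X - 1)²)`. Together with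
`X^(p+q) χ(Mᵀ M) = X^n χ(M Mᵀ)` this says that the eigenvalues of `Mᵀ M`, padded with `p + q`
zeros and `q` ones, are the numbers `1 ± σⱼ(B)` padded with `n` zeros and `p` ones. Above the
threshold `1` the two families therefore coincide; since `Mᵀ M` has at least `p` eigenvalues `≥ 1`
and every `1 + σⱼ(B)` is `≥ 1`, the `i`-th largest eigenvalue of `Mᵀ M` is `1 + σᵢ(B)` for
`i < min p q`.
-/

open Polynomial

namespace Matrix

theorem eigenvalues_transpose_mul_self_nonneg {m n : Type*} [Fintype m] [Fintype n]
    [DecidableEq n] (A : Matrix m n ℝ) (i : n) :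
    0 ≤ (isHermitian_transpose_mul_self A).eigenvalues i :=
  eigenvalues_conjTranspose_mul_self_nonneg A i

variable {R : Type*} [CommRing R] {m n : Type*} [Fintype m] [Fintype n] [DecidableEq m]
  [DecidableEq n]

theorem det_fromBlocks_scalar_neg (y : R) (B : Matrix m n R) (C : Matrix n m R) :
    y ^ Fintype.card n * (fromBlocks (scalar m y) (-B) (-C) (scalar n y)).det
      = y ^ Fintype.card m * (scalar n (y * y) - C * B).det := by
  have hL : (fromBlocks 1 0 C (scalar n y)).det = y ^ Fintype.card n := by
    simp [det_fromBlocks_zero₁₂]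
  have hLS : fromBlocks 1 0 C (scalar n y) * fromBlocks (scalar m y) (-B) (-C) (scalar n y)
      = fromBlocks (scalar m y) (-B) 0 (scalar n (y * y) - C * B) := by
    rw [fromBlocks_multiply]
    congr 1 <;> simp [← smul_eq_mul_diagonal, ← smul_eq_diagonal_mul, sub_eq_neg_add,
      ← diagonal_smul]
  rw [← hL, ← det_mul, hLS, det_fromBlocks_zero₂₁]
  simp

theorem charpoly_fromBlocks_one (B : Matrix m n R) (C : Matrix n m R) :
    (X - 1) ^ Fintype.card n * (fromBlocks 1 B C 1).charpoly
      = (X - 1) ^ Fintype.card m * (C * B).charpoly.comp ((X - 1) ^ 2) := by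
  have hcomp : (C * B).charpoly.comp ((X - 1) ^ 2)
      = (scalar n ((X - 1) * (X - 1)) - C.map Polynomial.C * B.map Polynomial.C).det := by
    rw [← sq, ← Matrix.map_mul, ← eval_charpoly, charpoly_map, eval_map]
    rfl
  rw [charpoly, charmatrix_fromBlocks, charmatrix_one, charmatrix_one, ← scalar_apply,
    ← scalar_apply, hcomp, det_fromBlocks_scalar_neg]

theorem charpoly_transpose_mul_fromRows {k l : Type*} [Fintype k] [Fintype l] [DecidableEq k]
    [DecidableEq l] (V₁ : Matrix n k R) (V₂ : Matrix n l R) (h₁ : V₁ᵀ * V₁ = 1)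
    (h₂ : V₂ᵀ * V₂ = 1) :
    X ^ (Fintype.card k + Fintype.card l) * (X - 1) ^ Fintype.card l
        * ((fromRows V₁ᵀ V₂ᵀ)ᵀ * fromRows V₁ᵀ V₂ᵀ).charpoly
      = X ^ Fintype.card n * (X - 1) ^ Fintype.card k
        * ((V₁ᵀ * V₂)ᵀ * (V₁ᵀ * V₂)).charpoly.comp ((X - 1) ^ 2) := by
  have hgram : fromRows V₁ᵀ V₂ᵀ * (fromRows V₁ᵀ V₂ᵀ)ᵀ = fromBlocks 1 (V₁ᵀ * V₂) (V₁ᵀ * V₂)ᵀ 1 := by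
    rw [transpose_fromRows, transpose_transpose, transpose_transpose, fromRows_mul_fromCols, h₁,
      h₂, transpose_mul, transpose_transpose]
  have hcomm := charpoly_mul_comm' (fromRows V₁ᵀ V₂ᵀ)ᵀ (fromRows V₁ᵀ V₂ᵀ)
  rw [Fintype.card_sum, hgram] at hcomm
  rw [mul_right_comm, hcomm, mul_assoc, mul_comm (charpoly _), charpoly_fromBlocks_one, ← mul_assoc]

end Matrix

theorem Multiset.countP_replicate {α : Type*} (P : α → Prop) [DecidablePred P] (k : ℕ) (a : α) :
    (replicate k a).countP P = if P a then k else 0 := by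
  simp only [← coe_replicate, coe_countP, List.countP_replicate, decide_eq_true_eq]

namespace Tuple

variable {α : Type*} [LinearOrder α]

theorem le_apply_rev_iff_lt_countP {k : ℕ} {f : Fin k → α} {σ : Equiv.Perm (Fin k)}
    (hσ : Monotone (f ∘ σ)) (c : α) (j : Fin k) :
    c ≤ f (σ j.rev) ↔ (j : ℕ) < (Finset.univ.val.map f).countP (c ≤ ·) := by
  have hanti : Antitone (f ∘ σ ∘ Fin.rev) := hσ.comp_antitone Fin.rev_anti
  have hperm : Finset.univ.val.map (f ∘ σ ∘ Fin.rev) = Finset.univ.val.map f := by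
    rw [← Multiset.map_map, ← Multiset.map_map,
      show (Fin.rev : Fin k → Fin k) = Fin.revPerm from rfl, Multiset.map_univ_val_equiv,
      Multiset.map_univ_val_equiv]
  rw [← hperm, Multiset.countP_map]
  exact (lt_card_ge_iff_apply_ge_of_antitone (j := j) (a := c) hanti).symm

theorem apply_rev_eq_of_filter_lt_eq {k l : ℕ} {f : Fin k → α} {g : Fin l → α}
    {σ : Equiv.Perm (Fin k)} {τ : Equiv.Perm (Fin l)} (hσ : Monotone (f ∘ σ))
    (hτ : Monotone (g ∘ τ)) {a : α} (hg : ∀ t, a ≤ g t)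
    (hfg : (Finset.univ.val.map f).filter (a < ·) = (Finset.univ.val.map g).filter (a < ·))
    {j : Fin k} {j' : Fin l} (hjj' : (j : ℕ) = j')
    (hj : (j : ℕ) < (Finset.univ.val.map f).countP (a ≤ ·)) :
    f (σ j.rev) = g (τ j'.rev) := by
  refine eq_of_forall_le_iff fun c => ?_
  rw [le_apply_rev_iff_lt_countP hσ, le_apply_rev_iff_lt_countP hτ, ← hjj']
  rcases lt_or_ge a c with hac | hca
  · have hcount : ∀ s : Multiset α, s.countP (c ≤ ·) = (s.filter (a < ·)).countP (c ≤ ·) :=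
      fun s => by
        rw [Multiset.countP_filter]
        exact Multiset.countP_congr rfl fun x _ =>
          propext ⟨fun h => ⟨h, hac.trans_le h⟩, And.left⟩
    rw [hcount, hfg, ← hcount]
  · refine iff_of_true (hj.trans_le ?_) ?_
    · rw [Multiset.countP_eq_card_filter, Multiset.countP_eq_card_filter]
      exact Multiset.card_le_card (Multiset.monotone_filter_right _ fun x => hca.trans)
    · rw [Multiset.countP_eq_card.mpr, Multiset.card_map, Finset.card_val, Finset.card_univ,
        Fintype.card_fin, hjj']
      · exact j'.isLt
      · simpa using fun t => hca.trans (hg t)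

end Tuple

section StackedBases

open Multiset

variable {n p q : ℕ} (V1 : Matrix (Fin n) (Fin p) ℝ) (V2 : Matrix (Fin n) (Fin q) ℝ)

theorem eigenvalues_transpose_mul_fromRows (h1 : V1ᵀ * V1 = 1) (h2 : V2ᵀ * V2 = 1) :
    Finset.univ.val.map (isHermitian_transpose_mul_self (fromRows V1ᵀ V2ᵀ)).eigenvalues
        + replicate (p + q) 0 + replicate q 1
      = Finset.univ.val.map
          (fun j => 1 + √((isHermitian_transpose_mul_self (V1ᵀ * V2)).eigenvalues j))
        + Finset.univ.val.map
          (fun j => 1 - √((isHermitian_transpose_mul_self (V1ᵀ * V2)).eigenvalues j))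
        + replicate n 0 + replicate p 1 := by
  set ν := (isHermitian_transpose_mul_self (fromRows V1ᵀ V2ᵀ)).eigenvalues
  set μ := (isHermitian_transpose_mul_self (V1ᵀ * V2)).eigenvalues
  have hfactor : ∀ j, (X - C (μ j)).comp ((X - 1) ^ 2)
      = (X - C (1 + √(μ j))) * (X - C (1 - √(μ j))) := fun j => by
    have hsq : C (μ j) = C √(μ j) ^ 2 := by
      rw [← C_pow, Real.sq_sqrt (eigenvalues_transpose_mul_self_nonneg _ j)]
    rw [sub_comp, X_comp, C_comp, hsq, C_add, C_sub, C_1]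
    ring
  have hpoly := charpoly_transpose_mul_fromRows V1 V2 h1 h2
  simp only [Fintype.card_fin] at hpoly
  rw [(isHermitian_transpose_mul_self _).charpoly_eq,
    (isHermitian_transpose_mul_self _).charpoly_eq, prod_comp] at hpoly
  simp only [RCLike.ofReal_real_eq_id, id] at hpoly
  rw [Finset.prod_congr rfl fun j _ => hfactor j, Finset.prod_mul_distrib] at hpoly
  rw [← roots_multiset_prod_X_sub_C (_ + _ + _), ← roots_multiset_prod_X_sub_C (_ + _ + _ + _)]
  congr 1
  simp only [Multiset.map_add, Multiset.prod_add, Multiset.map_replicate, Multiset.prod_replicate,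
    Multiset.map_map, Function.comp_def, C_0, C_1, sub_zero, ← Finset.prod_eq_multiset_prod]
  linear_combination hpoly

theorem sq_svalDesc_fromRows (h1 : V1ᵀ * V1 = 1) (h2 : V2ᵀ * V2 = 1) {j : Fin n} {j' : Fin q}
    (hjj' : (j : ℕ) = j') (hj : (j : ℕ) < p) :
    svalDesc (fromRows V1ᵀ V2ᵀ) j ^ 2 = 1 + svalDesc (V1ᵀ * V2) j' := by
  unfold svalDesc svalAsc
  rw [Real.sq_sqrt (eigenvalues_transpose_mul_self_nonneg _ _)]
  have hmult := eigenvalues_transpose_mul_fromRows V1 V2 h1 h2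
  set ν := (isHermitian_transpose_mul_self (fromRows V1ᵀ V2ᵀ)).eigenvalues
  set μ := (isHermitian_transpose_mul_self (V1ᵀ * V2)).eigenvalues
  refine Tuple.apply_rev_eq_of_filter_lt_eq (g := fun t => 1 + √(μ t)) (Tuple.monotone_sort ν)
    (fun a b hab => add_le_add_right (Real.sqrt_le_sqrt (Tuple.monotone_sort μ hab)) 1)
    (fun t => le_add_of_nonneg_right (Real.sqrt_nonneg _)) ?_ hjj' ?_
  · have hnone : ∀ s : Multiset ℝ, (∀ x ∈ s, x ≤ 1) → s.filter (1 < ·) = 0 :=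
      fun s hs => filter_eq_nil.mpr fun x hx => (hs x hx).not_gt
    have hrep : ∀ k (a : ℝ), a ≤ 1 → ∀ x ∈ replicate k a, x ≤ 1 :=
      fun k a ha x hx => (eq_of_mem_replicate hx).trans_le ha
    have h := congrArg (filter (1 < ·)) hmult
    rwa [filter_add, filter_add, filter_add, filter_add, filter_add,
      hnone _ (hrep _ 0 zero_le_one), hnone _ (hrep _ 0 zero_le_one), hnone _ (hrep _ 1 le_rfl),
      hnone _ (hrep _ 1 le_rfl), hnone (Finset.univ.val.map _)
      (forall_mem_map_iff.mpr fun t _ => sub_le_self 1 (Real.sqrt_nonneg _)), add_zero, add_zero,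
      add_zero, add_zero, add_zero] at h
  · have hG : countP (1 ≤ ·) (Finset.univ.val.map fun t => 1 + √(μ t)) = q := by
      rw [countP_eq_card.mpr (forall_mem_map_iff.mpr fun t _ =>
        le_add_of_nonneg_right (Real.sqrt_nonneg _)), card_map, Finset.card_val, Finset.card_univ,
        Fintype.card_fin]
    have h := congrArg (countP (1 ≤ ·)) hmult
    have h10 : ¬ (1 : ℝ) ≤ 0 := by norm_num
    simp only [countP_add, countP_replicate, hG, h10, le_refl, if_true, if_false] at h
    omega

end StackedBases

theorem stacked_sval_sq_eq_one_add_cos_general (n p q : ℕ) (hpn : p ≤ n)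
    (V1 : Matrix (Fin n) (Fin p) ℝ) (V2 : Matrix (Fin n) (Fin q) ℝ)
    (h1 : V1ᵀ * V1 = 1) (h2 : V2ᵀ * V2 = 1)
    (M : Matrix (Fin p ⊕ Fin q) (Fin n) ℝ) (hM : M = Matrix.fromRows V1ᵀ V2ᵀ)
    (i : Fin (min p q)) :
    svalDesc M (Fin.castLE (le_trans (min_le_left p q) hpn) i) ^ 2
      = 1 + svalDesc (V1ᵀ * V2) (Fin.castLE (min_le_right p q) i) ∧
    Real.arccos (svalDesc M (Fin.castLE (le_trans (min_le_left p q) hpn) i) ^ 2 - 1)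
      = Real.arccos (svalDesc (V1ᵀ * V2) (Fin.castLE (min_le_right p q) i)) := by
  subst hM
  have hsq := sq_svalDesc_fromRows V1 V2 h1 h2 (j := Fin.castLE (le_trans (min_le_left p q) hpn) i)
    (j' := Fin.castLE (min_le_right p q) i) rfl (i.2.trans_le (min_le_left p q))
  exact ⟨hsq, by rw [hsq, add_sub_cancel_left]⟩

/-- for orthonormal basis matrices `V₁` (`n × p`) and `V₂` (`n × q`) and
the stacked matrix `M = [V₁ᵀ; V₂ᵀ]`, the `i`-th (largest) singular value of `M` satisfies
`σᵢ² = 1 + cos φᵢ` for `i < min p q`, where `cos φᵢ` is the `i`-th largest singular value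
of `V₁ᵀ V₂`; equivalently `φᵢ = arccos (σᵢ² − 1)`. -/
theorem stacked_sval_sq_eq_one_add_cos (n p q : ℕ) (hpn : p ≤ n) (hqn : q ≤ n)
    (V1 : Matrix (Fin n) (Fin p) ℝ) (V2 : Matrix (Fin n) (Fin q) ℝ)
    (h1 : V1ᵀ * V1 = 1) (h2 : V2ᵀ * V2 = 1)
    (M : Matrix (Fin p ⊕ Fin q) (Fin n) ℝ) (hM : M = Matrix.fromRows V1ᵀ V2ᵀ)
    (i : Fin (min p q)) :
    svalDesc M (Fin.castLE (le_trans (min_le_left p q) hpn) i) ^ 2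
      = 1 + svalDesc (V1ᵀ * V2) (Fin.castLE (min_le_right p q) i) ∧
    Real.arccos (svalDesc M (Fin.castLE (le_trans (min_le_left p q) hpn) i) ^ 2 - 1)
      = Real.arccos (svalDesc (V1ᵀ * V2) (Fin.castLE (min_le_right p q) i)) :=
  stacked_sval_sq_eq_one_add_cos_general n p q hpn V1 V2 h1 h2 M hM i
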